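/- Let K = ℓ²(ℕ) (indexed from n = 1) and H = K ⊕ K. Let A be the diagonal operator on K with diagonals (1/n)_n and B the diagonal operator with diagonals (1/n²)_n. Then the systems (H; K ⊕ 0, graph(A)) and (H; K ⊕ 0, graph(B)) are algebraically isomorphic (there is a linear bijection of H carrying the corresponding subspaces onto each other), but they are not boundedly isomorphic. -/

import Mathlib

noncomputable section

abbrev K : Type := lp (fun _ : ℕ => ℂ) 2

/-- The graph of the diagonal operator with diagonals `a`, as a subspace of `K × K`. -/
def diagGraph (a : ℕ → ℂ) : Submodule ℂ (K × K) where
  carrier := {p | ∀ n, p.2 n = a n * p.1 n}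
  add_mem' := by
    intro p q hp hq n
    simp only [Prod.snd_add, Prod.fst_add, lp.coeFn_add, Pi.add_apply, hp n, hq n]
    ring
  zero_mem' := by
    intro n
    simp [lp.coeFn_zero]
  smul_mem' := by
    intro c p hp n
    simp only [Prod.smul_snd, Prod.smul_fst, lp.coeFn_smul, Pi.smul_apply, hp n, smul_eq_mul]
    ring

/-- The subspace K ⊕ 0 of K ⊕ K. -/
def firstSummand : Submodule ℂ (K × K) := (⊤ : Submodule ℂ K).prod (⊥ : Submodule ℂ K)

/-!
Algebraically, `V = id × R` works as soon as `R` is a linear automorphism of `K` with `R ∘ A = B`.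
Such an `R` exists because `A` and `B` are injective and their ranges both have codimension `𝔠`:
for `z` in either range the sequence `(n + 1) zₙ` is bounded, while for every nontrivial finite
combination `z` of the sequences `((n + 1) ^ (-s))ₙ`, `1/2 < s < 1`, it is not (it grows like
`(n + 1) ^ (1 - s₀)` for the smallest `s₀` involved).

Boundedly, a `V` fixing `K ⊕ 0` and carrying `graph A` onto `graph B` gives bounded `C`, `U` with
`A = C B U`, where `C` is the lower right block of `V⁻¹`. Choose `w ≠ 0` supported on the first
`N + 1` coordinates such that `U w` vanishes on the first `N`; then
`‖w‖ ≤ (N + 1) ‖A w‖ ≤ (N + 1) ‖C‖ ‖U‖ ‖w‖ / (N + 1) ^ 2`, impossible once `N + 1 > ‖C‖ ‖U‖`.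
-/

open Filter Topology

open Function Submodule in
theorem exists_linearEquiv_apply_eq_of_rank_quotient_range_eq {𝕜 M N : Type*} [DivisionRing 𝕜]
    [AddCommGroup M] [Module 𝕜 M] [AddCommGroup N] [Module 𝕜 N] {f g : M →ₗ[𝕜] N}
    (hf : Injective f) (hg : Injective g)
    (h : Module.rank 𝕜 (N ⧸ LinearMap.range f) = Module.rank 𝕜 (N ⧸ LinearMap.range g)) :
    ∃ R : N ≃ₗ[𝕜] N, ∀ x, R (f x) = g x := by
  obtain ⟨p, hp⟩ := (LinearMap.range f).exists_isCompl
  obtain ⟨q, hq⟩ := (LinearMap.range g).exists_isCompl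
  obtain ⟨e⟩ : Nonempty (p ≃ₗ[𝕜] q) := nonempty_linearEquiv_of_rank_eq <| by
    rw [← (quotientEquivOfIsCompl _ _ hp).rank_eq, ← (quotientEquivOfIsCompl _ _ hq).rank_eq, h]
  let eRange := (LinearEquiv.ofInjective f hf).symm.trans (LinearEquiv.ofInjective g hg)
  refine ⟨(prodEquivOfIsCompl _ _ hp).symm.trans
    ((eRange.prodCongr e).trans (prodEquivOfIsCompl _ _ hq)), fun x => ?_⟩
  have hfx : (prodEquivOfIsCompl _ _ hp).symm (f x) = (LinearEquiv.ofInjective f hf x, 0) :=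
    prodEquivOfIsCompl_symm_apply_left _ _ hp (LinearEquiv.ofInjective f hf x)
  simp [hfx, eRange]

section GraphLemmas

variable {R M N : Type*} [Semiring R] [AddCommMonoid M] [Module R M] [AddCommMonoid N] [Module R N]

theorem LinearEquiv.image_prodCongr_refl_graph {f g : M →ₗ[R] N} (e : N ≃ₗ[R] N)
    (h : ∀ x, e (f x) = g x) :
    ((LinearEquiv.refl R M).prodCongr e) '' (f.graph : Set (M × N)) = g.graph := by
  ext p
  simp only [Set.mem_image, SetLike.mem_coe, LinearMap.mem_graph_iff]
  constructor
  · rintro ⟨q, hq, rfl⟩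
    simp [hq, h]
  · intro hp
    exact ⟨(p.1, f p.1), rfl, by ext <;> simp [hp, h]⟩

theorem LinearEquiv.image_prodCongr_refl_prod_bot (e : N ≃ₗ[R] N) :
    ((LinearEquiv.refl R M).prodCongr e) '' ((⊤ : Submodule R M).prod (⊥ : Submodule R N)) =
      (⊤ : Submodule R M).prod (⊥ : Submodule R N) := by
  ext ⟨x, y⟩
  simp [eq_comm]

end GraphLemmas

theorem ContinuousLinearEquiv.exists_eq_comp_of_graph {R E F G H : Type*} [Ring R]
    [TopologicalSpace E] [AddCommGroup E] [Module R E] [TopologicalSpace F] [AddCommGroup F]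
    [Module R F] [TopologicalSpace G] [AddCommGroup G] [Module R G] [TopologicalSpace H]
    [AddCommGroup H] [Module R H] (A : E →L[R] F) (B : G →L[R] H) (V : (E × F) ≃L[R] (G × H))
    (hV : ∀ x, (V.symm (x, 0)).2 = 0) (hAB : ∀ x, (V (x, A x)).2 = B (V (x, A x)).1) :
    ∃ (C : H →L[R] F) (U : E →L[R] G), ∀ x, A x = C (B (U x)) := by
  refine ⟨(ContinuousLinearMap.snd R E F).comp
      ((V.symm : G × H →L[R] E × F).comp (ContinuousLinearMap.inr R G H)),
    (ContinuousLinearMap.fst R G H).comp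
      ((V : E × F →L[R] G × H).comp ((ContinuousLinearMap.id R E).prod A)), fun x => ?_⟩
  have hsplit : ((0 : G), B (V (x, A x)).1) = V (x, A x) - ((V (x, A x)).1, 0) := by
    ext <;> simp [hAB]
  simp [hsplit, map_sub, hV]

theorem Complex.norm_natCast_add_one (n : ℕ) : ‖(n : ℂ) + 1‖ = n + 1 := by
  exact_mod_cast Complex.norm_natCast (n + 1)

theorem tendsto_rpow_mul_sum_rpow_neg {ι : Type*} (t : Finset ι) (e : ι → ℝ) (g : ι → ℂ)
    {i₀ : ι} (hi₀ : i₀ ∈ t) (hlt : ∀ j ∈ t, j ≠ i₀ → g j ≠ 0 → e i₀ < e j) :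
    Tendsto (fun x : ℝ => ((x ^ e i₀ : ℝ) : ℂ) * ∑ j ∈ t, g j * ((x ^ (-e j) : ℝ) : ℂ))
      atTop (𝓝 (g i₀)) := by
  classical
  have hterm : ∀ j ∈ t, Tendsto (fun x : ℝ => g j * ((x ^ (e i₀ - e j) : ℝ) : ℂ)) atTop
      (𝓝 (if i₀ = j then g i₀ else 0)) := by
    intro j hj
    split_ifs with h
    · simp [h]
    by_cases hg : g j = 0
    · simp [hg]
    have hpow : Tendsto (fun x : ℝ => x ^ (e i₀ - e j)) atTop (𝓝 0) := by
      simpa using tendsto_rpow_neg_atTop (sub_pos.2 (hlt j hj (Ne.symm h) hg))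
    simpa using ((Complex.continuous_ofReal.tendsto 0).comp hpow).const_mul (g j)
  have hsum := tendsto_finsetSum t hterm
  rw [Finset.sum_ite_eq t i₀, if_pos hi₀] at hsum
  refine hsum.congr' ?_
  filter_upwards [eventually_gt_atTop 0] with x hx
  rw [Finset.mul_sum]
  refine Finset.sum_congr rfl fun j _ => ?_
  rw [sub_eq_add_neg, Real.rpow_add hx]
  push_cast
  ring

theorem eq_zero_of_norm_natCast_add_one_mul_sum_rpow_neg_le {ι : Type*} (t : Finset ι) (e : ι → ℝ)
    (he : Set.InjOn e t) (he1 : ∀ j ∈ t, e j < 1) (g : ι → ℂ) (M : ℝ)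
    (hM : ∀ n : ℕ, ‖((n : ℂ) + 1) * ∑ j ∈ t, g j * (((n + 1 : ℝ) ^ (-e j) : ℝ) : ℂ)‖ ≤ M) :
    ∀ i ∈ t, g i = 0 := by
  by_contra! ⟨i, hi, hgi⟩
  obtain ⟨i₀, hi₀, hmin⟩ := (t.filter (g · ≠ 0)).exists_min_image e ⟨i, by simp [hi, hgi]⟩
  rw [Finset.mem_filter] at hi₀
  have hsucc : Tendsto (fun n : ℕ => (n + 1 : ℝ)) atTop atTop :=
    tendsto_atTop_add_const_right _ 1 tendsto_natCast_atTop_atTop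
  have hlim := (tendsto_rpow_mul_sum_rpow_neg t e g hi₀.1 fun j hj hne hg =>
    (hmin j (Finset.mem_filter.2 ⟨hj, hg⟩)).lt_of_ne (he.ne hi₀.1 hj hne.symm)).comp hsucc
  have hzero : Tendsto (fun n : ℕ => (((n + 1 : ℝ) ^ e i₀ : ℝ) : ℂ) *
      ∑ j ∈ t, g j * (((n + 1 : ℝ) ^ (-e j) : ℝ) : ℂ)) atTop (𝓝 0) := by
    have hpow : Tendsto (fun n : ℕ => (((n + 1 : ℝ) ^ (e i₀ - 1) : ℝ) : ℂ)) atTop (𝓝 0) := by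
      simpa [Function.comp_def] using (Complex.continuous_ofReal.tendsto 0).comp
        ((tendsto_rpow_neg_atTop (sub_pos.2 (he1 i₀ hi₀.1))).comp hsucc)
    refine (hpow.zero_mul_isBoundedUnder_le (isBoundedUnder_of ⟨M, hM⟩)).congr fun n => ?_
    rw [Real.rpow_sub_one (by positivity)]
    push_cast
    field_simp
  exact hi₀.2 (tendsto_nhds_unique hlim hzero)

theorem memℓp_rpow_neg {s : ℝ} (hs : 1 / 2 < s) :
    Memℓp (fun n : ℕ => (((n + 1 : ℝ) ^ (-s) : ℝ) : ℂ)) 2 := by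
  refine memℓp_gen ?_
  have := (summable_nat_add_iff 1).2 (Real.summable_nat_rpow.2 (by linarith : -(2 * s) < -1))
  refine this.congr fun n => ?_
  rw [Complex.norm_real, Real.norm_of_nonneg (by positivity), ← Real.rpow_mul (by positivity)]
  push_cast
  norm_num [mul_comm]

def rpowSeq (s : ℝ) (hs : 1 / 2 < s) : K := ⟨_, memℓp_rpow_neg hs⟩

theorem linearIndependent_mkQ_rpowSeq (p : Submodule ℂ K)
    (hp : ∀ z ∈ p, ∃ M, ∀ n : ℕ, ‖((n : ℂ) + 1) * z n‖ ≤ M) :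
    LinearIndependent ℂ (fun s : Set.Ioo (1 / 2 : ℝ) 1 => p.mkQ (rpowSeq s s.2.1)) := by
  rw [linearIndependent_iff']
  intro t g hg
  have hz : ∑ j ∈ t, g j • rpowSeq j j.2.1 ∈ p := by
    rw [← Submodule.Quotient.mk_eq_zero, ← Submodule.mkQ_apply, map_sum]
    simpa using hg
  obtain ⟨M, hM⟩ := hp _ hz
  refine eq_zero_of_norm_natCast_add_one_mul_sum_rpow_neg_le t (↑) Subtype.val_injective.injOn
    (fun j _ => j.2.2) g M fun n => ?_
  have hcoord : (∑ j ∈ t, g j • rpowSeq j j.2.1 : K) n =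
      ∑ j ∈ t, g j * (((n + 1 : ℝ) ^ (-(j : ℝ)) : ℝ) : ℂ) := by
    rw [lp.coeFn_sum, Finset.sum_apply]
    rfl
  exact hcoord ▸ hM n

theorem mk_K_le_continuum : Cardinal.mk K ≤ Cardinal.continuum := by
  calc Cardinal.mk K ≤ Cardinal.mk (ℕ → ℂ) := Cardinal.mk_le_of_injective Subtype.val_injective
    _ = Cardinal.continuum := by
      rw [← Cardinal.power_def, Cardinal.mk_complex, Cardinal.mk_nat,
        Cardinal.continuum_power_aleph0]

theorem rank_quotient_eq_continuum (p : Submodule ℂ K)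
    (hp : ∀ z ∈ p, ∃ M, ∀ n : ℕ, ‖((n : ℂ) + 1) * z n‖ ≤ M) :
    Module.rank ℂ (K ⧸ p) = Cardinal.continuum := by
  refine le_antisymm ((rank_quotient_le p).trans ((rank_le_card ℂ K).trans mk_K_le_continuum)) ?_
  have := (linearIndependent_mkQ_rpowSeq p hp).cardinal_le_rank
  rwa [Cardinal.mk_Ioo_real (by norm_num)] at this

theorem norm_le_mul_norm_of_forall_norm_apply_le {x y : K} (c : ℝ) (hc : 0 ≤ c)
    (h : ∀ n, ‖x n‖ ≤ c * ‖y n‖) : ‖x‖ ≤ c * ‖y‖ := by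
  have := lp.norm_mono (p := 2) (by norm_num) (x := x) (y := c • y)
    (fun n => by simpa [norm_smul, abs_of_nonneg hc] using h n)
  simpa [norm_smul, abs_of_nonneg hc] using this

def diagOp (a : ℕ → ℂ) {C : ℝ} (ha : ∀ n, ‖a n‖ ≤ C) : K →L[ℂ] K :=
  LinearMap.mkContinuous
    { toFun x := ⟨fun n => a n * x n, ((lp.memℓp x).norm.const_smul C).mono fun n => by
        simpa [norm_mul] using mul_le_mul_of_nonneg_right (ha n) (norm_nonneg (x n))⟩
      map_add' x y := by ext n; exact mul_add _ _ _
      map_smul' c x := by ext n; simp [mul_left_comm] }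
    C fun x => norm_le_mul_norm_of_forall_norm_apply_le C ((norm_nonneg _).trans (ha 0)) fun n => by
      simpa [norm_mul] using mul_le_mul_of_nonneg_right (ha n) (norm_nonneg (x n))

section DiagOp

variable {a : ℕ → ℂ} {C : ℝ} (ha : ∀ n, ‖a n‖ ≤ C)

@[simp]
theorem diagOp_apply (x : K) (n : ℕ) : diagOp a ha x n = a n * x n := rfl

theorem diagGraph_eq_graph : diagGraph a = (diagOp a ha : K →ₗ[ℂ] K).graph := by
  ext p
  rw [LinearMap.mem_graph_iff, lp.ext_iff, funext_iff]
  rfl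

theorem diagOp_injective (h0 : ∀ n, a n ≠ 0) : Function.Injective (diagOp a ha) :=
  fun _ _ hxy => lp.ext <| funext fun n => mul_left_cancel₀ (h0 n) congr($hxy n)

theorem rank_quotient_range_diagOp_eq_continuum {D : ℝ}
    (h : ∀ n : ℕ, ‖((n : ℂ) + 1) * a n‖ ≤ D) :
    Module.rank ℂ (K ⧸ LinearMap.range (diagOp a ha : K →ₗ[ℂ] K)) = Cardinal.continuum := by
  refine rank_quotient_eq_continuum _ ?_
  rintro _ ⟨x, rfl⟩
  refine ⟨D * ‖x‖, fun n => ?_⟩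
  rw [ContinuousLinearMap.coe_coe, diagOp_apply, ← mul_assoc, norm_mul]
  exact mul_le_mul (h n) (lp.norm_apply_le_norm two_ne_zero x n) (norm_nonneg _)
    ((norm_nonneg _).trans (h 0))

theorem norm_le_mul_norm_diagOp {x : K} {c : ℝ} (hc : 0 ≤ c) (h : ∀ n, x n ≠ 0 → 1 ≤ c * ‖a n‖) :
    ‖x‖ ≤ c * ‖diagOp a ha x‖ :=
  norm_le_mul_norm_of_forall_norm_apply_le c hc fun n => by
    by_cases hx : x n = 0
    · simp [hx]
    · simpa [norm_mul, mul_assoc] using mul_le_mul_of_nonneg_right (h n hx) (norm_nonneg (x n))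

theorem norm_diagOp_le {y : K} {c : ℝ} (hc : 0 ≤ c) (h : ∀ n, y n ≠ 0 → ‖a n‖ ≤ c) :
    ‖diagOp a ha y‖ ≤ c * ‖y‖ :=
  norm_le_mul_norm_of_forall_norm_apply_le c hc fun n => by
    by_cases hy : y n = 0
    · simp [hy]
    · simpa [norm_mul] using mul_le_mul_of_nonneg_right (h n hy) (norm_nonneg (y n))

end DiagOp

theorem norm_one_div_natCast_add_one_pow_le (k n : ℕ) : ‖1 / ((n : ℂ) + 1) ^ k‖ ≤ 1 := by
  rw [norm_div, norm_one, norm_pow, Complex.norm_natCast_add_one]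
  exact div_le_one_of_le₀ (one_le_pow₀ (by linarith [n.cast_nonneg (α := ℝ)])) (by positivity)

theorem norm_natCast_add_one_mul_one_div_pow_succ_le (k n : ℕ) :
    ‖((n : ℂ) + 1) * (1 / ((n : ℂ) + 1) ^ (k + 1))‖ ≤ 1 := by
  rw [pow_succ, ← div_div, mul_div_cancel₀ _ (Nat.cast_add_one_ne_zero n)]
  exact norm_one_div_natCast_add_one_pow_le k n

theorem exists_ne_zero_support_le_apply_eq_zero_of_lt (U : K →ₗ[ℂ] K) (M : ℕ) :
    ∃ w : K, w ≠ 0 ∧ (∀ n, M < n → w n = 0) ∧ ∀ n < M, U w n = 0 := by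
  let φ : (Fin (M + 1) → ℂ) →ₗ[ℂ] K :=
    ∑ i : Fin (M + 1), (lp.lsingle 2 (i : ℕ)).comp (LinearMap.proj i)
  let ψ : K →ₗ[ℂ] Fin M → ℂ := LinearMap.pi fun i => lp.evalₗ _ 2 (i : ℕ)
  have hφ : ∀ c n, φ c n = if h : n < M + 1 then c ⟨n, h⟩ else 0 := by
    intro c n
    simp only [φ, LinearMap.coe_sum, Finset.sum_apply, LinearMap.comp_apply, LinearMap.proj_apply,
      lp.lsingle_apply, lp.coeFn_sum, lp.coeFn_single, Pi.single_apply]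
    split_ifs with h
    · rw [Finset.sum_eq_single ⟨n, h⟩] <;> simp +contextual [Fin.ext_iff, eq_comm]
    · exact Finset.sum_eq_zero fun i _ => if_neg fun (hi : n = i) => h (hi ▸ i.isLt)
  obtain ⟨c, hc, hc0⟩ := (Submodule.ne_bot_iff _).1
    (LinearMap.ker_ne_bot_of_finrank_lt (f := ψ ∘ₗ U ∘ₗ φ) (by simp))
  refine ⟨φ c, fun h => hc0 (funext fun i => ?_), fun n hn => ?_, fun n hn => ?_⟩
  · simpa [hφ, Nat.lt_succ_iff.1 i.isLt] using congr($h i)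
  · simp [hφ, hn.not_ge]
  · simpa [ψ] using congrFun hc ⟨n, hn⟩

theorem not_exists_eq_comp_diagOp {Ca Cb : ℝ} (ha : ∀ n : ℕ, ‖1 / ((n : ℂ) + 1)‖ ≤ Ca)
    (hb : ∀ n : ℕ, ‖1 / ((n : ℂ) + 1) ^ 2‖ ≤ Cb) :
    ¬ ∃ C U : K →L[ℂ] K, ∀ x, diagOp _ ha x = C (diagOp _ hb (U x)) := by
  rintro ⟨C, U, hCU⟩
  obtain ⟨N, hN⟩ := exists_nat_gt (‖C‖ * ‖U‖)
  obtain ⟨w, hw0, hw, hUw⟩ := exists_ne_zero_support_le_apply_eq_zero_of_lt U N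
  have hN1 : (0 : ℝ) < N + 1 := by positivity
  have hA : ‖w‖ ≤ (N + 1) * ‖diagOp _ ha w‖ := by
    refine norm_le_mul_norm_diagOp ha hN1.le fun n hn => ?_
    have : (n : ℝ) ≤ N := by exact_mod_cast not_lt.1 (mt (hw n) hn)
    rw [norm_div, norm_one, Complex.norm_natCast_add_one, mul_one_div, one_le_div (by positivity)]
    linarith
  have hB : ‖diagOp _ hb (U w)‖ ≤ 1 / (N + 1) ^ 2 * ‖U w‖ := by
    refine norm_diagOp_le hb (by positivity) fun n hn => ?_
    have : (N : ℝ) ≤ n := by exact_mod_cast not_lt.1 (mt (hUw n) hn)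
    rw [norm_div, norm_one, norm_pow, Complex.norm_natCast_add_one]
    gcongr
  have key : ‖w‖ ≤ ‖C‖ * ‖U‖ / (N + 1) * ‖w‖ := calc
    ‖w‖ ≤ (N + 1) * ‖C (diagOp _ hb (U w))‖ := hCU w ▸ hA
    _ ≤ (N + 1) * (‖C‖ * (1 / (N + 1) ^ 2 * (‖U‖ * ‖w‖))) := by
      gcongr
      exact C.le_opNorm_of_le (hB.trans (by gcongr; exact U.le_opNorm w))
    _ = ‖C‖ * ‖U‖ / (N + 1) * ‖w‖ := by field_simp
  have : ‖C‖ * ‖U‖ / (N + 1) < 1 := by rw [div_lt_one hN1]; linarith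
  nlinarith [norm_pos_iff.2 hw0]

theorem exists_linearEquiv_image_diagGraph_eq {a b : ℕ → ℂ} {Ca Cb Da Db : ℝ}
    (ha : ∀ n, ‖a n‖ ≤ Ca) (hb : ∀ n, ‖b n‖ ≤ Cb) (ha0 : ∀ n, a n ≠ 0) (hb0 : ∀ n, b n ≠ 0)
    (haD : ∀ n : ℕ, ‖((n : ℂ) + 1) * a n‖ ≤ Da) (hbD : ∀ n : ℕ, ‖((n : ℂ) + 1) * b n‖ ≤ Db) :
    ∃ V : (K × K) ≃ₗ[ℂ] (K × K), V '' firstSummand = firstSummand ∧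
      V '' diagGraph a = diagGraph b := by
  obtain ⟨R, hR⟩ := exists_linearEquiv_apply_eq_of_rank_quotient_range_eq
    (diagOp_injective ha ha0) (diagOp_injective hb hb0)
    (by rw [rank_quotient_range_diagOp_eq_continuum ha haD,
      rank_quotient_range_diagOp_eq_continuum hb hbD])
  refine ⟨(LinearEquiv.refl ℂ K).prodCongr R, LinearEquiv.image_prodCongr_refl_prod_bot R, ?_⟩
  rw [diagGraph_eq_graph ha, diagGraph_eq_graph hb]
  exact LinearEquiv.image_prodCongr_refl_graph R hR

theorem exists_eq_comp_diagOp_of_image_diagGraph_eq {a b : ℕ → ℂ} {Ca Cb : ℝ}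
    (ha : ∀ n, ‖a n‖ ≤ Ca) (hb : ∀ n, ‖b n‖ ≤ Cb) (V : (K × K) ≃L[ℂ] (K × K))
    (hV : V '' firstSummand = firstSummand) (hVab : V '' diagGraph a = diagGraph b) :
    ∃ C U : K →L[ℂ] K, ∀ x, diagOp a ha x = C (diagOp b hb (U x)) := by
  refine V.exists_eq_comp_of_graph _ _ (fun x => ?_) fun x => ?_
  · have hx : (x, (0 : K)) ∈ V '' firstSummand := by
      rw [hV]
      exact Submodule.mem_prod.2 ⟨Submodule.mem_top, Submodule.zero_mem _⟩
    rw [V.image_eq_preimage_symm] at hx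
    exact (Submodule.mem_bot ℂ).1 (Submodule.mem_prod.1 hx).2
  · have hx : V (x, diagOp a ha x) ∈ V '' diagGraph a := Set.mem_image_of_mem V <| by
      rw [SetLike.mem_coe, diagGraph_eq_graph ha, LinearMap.mem_graph_iff]
      rfl
    rwa [hVab, SetLike.mem_coe, diagGraph_eq_graph hb, LinearMap.mem_graph_iff] at hx

theorem algebraically_but_not_boundedly_isomorphic :
    (∃ V : (K × K) ≃ₗ[ℂ] (K × K),
        V '' ((firstSummand : Submodule ℂ (K × K)) : Set (K × K)) =
          (firstSummand : Set (K × K)) ∧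
        V '' ((diagGraph fun n : ℕ => 1 / ((n : ℂ) + 1)) : Set (K × K)) =
          ((diagGraph fun n : ℕ => 1 / ((n : ℂ) + 1) ^ 2) : Set (K × K))) ∧
    ¬ (∃ V : (K × K) ≃L[ℂ] (K × K),
        V '' (firstSummand : Set (K × K)) = (firstSummand : Set (K × K)) ∧
        V '' ((diagGraph fun n : ℕ => 1 / ((n : ℂ) + 1)) : Set (K × K)) =
          ((diagGraph fun n : ℕ => 1 / ((n : ℂ) + 1) ^ 2) : Set (K × K))) := by
  have ha : ∀ n : ℕ, ‖1 / ((n : ℂ) + 1)‖ ≤ 1 := fun n => by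
    simpa using norm_one_div_natCast_add_one_pow_le 1 n
  have hb : ∀ n : ℕ, ‖1 / ((n : ℂ) + 1) ^ 2‖ ≤ 1 := norm_one_div_natCast_add_one_pow_le 2
  refine ⟨exists_linearEquiv_image_diagGraph_eq ha hb
    (fun n => one_div_ne_zero (Nat.cast_add_one_ne_zero n))
    (fun n => one_div_ne_zero (pow_ne_zero 2 (Nat.cast_add_one_ne_zero n)))
    (fun n => by simpa using norm_natCast_add_one_mul_one_div_pow_succ_le 0 n)
    (norm_natCast_add_one_mul_one_div_pow_succ_le 1), ?_⟩
  rintro ⟨V, hV, hVab⟩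
  exact not_exists_eq_comp_diagOp ha hb
    (exists_eq_comp_diagOp_of_image_diagGraph_eq ha hb V hV hVab)

end
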